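/- arXiv:1612.06054 — 2 statements merged into one kernel-verified Lean document; each statement's English description precedes it below -/
import Mathlib

section
/- Let L be a first-order language with only function symbols, let K be a class of metric L-algebras closed under isometric L-isomorphisms, M-products (with the sup extended metric), and M-subalgebras, let X be a set, and let F : Term_L(X) → F_K(X) be the surjective L-homomorphism onto the K-free algebra over X (characterized by the universal property: every L-homomorphism from Term_L(X) into a member of K factors uniquely through F via a non-expansive L-homomorphism). Then for all L-terms s, t ∈ Term_L(X) and every ε ∈ [0,∞], d(F(s), F(t)) ≤ ε holds in F_K(X) if and only if every A in K satisfies the M-equation X ⊢ s =_ε t. -/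
open FirstOrder FirstOrder.Language
open scoped ENNReal

universe u v w x y z

noncomputable section

namespace MetricAlgebraPaper

/-- The sup extended metric on a product of extended metric spaces. -/
def supEMetric {I : Type*} (A : I → Type*) [∀ i, EMetricSpace (A i)] :
    EMetricSpace (∀ i, A i) where
  edist f g := ⨆ i, edist (f i) (g i)
  edist_self f := by simp
  edist_comm f g := by simp [edist_comm]
  edist_triangle f g h :=
    iSup_le fun i => (edist_triangle (f i) (g i) (h i)).trans
      (add_le_add (le_iSup (fun j => edist (f j) (g j)) i)
        (le_iSup (fun j => edist (g j) (h j)) i))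
  eq_of_edist_eq_zero := by
    intro f g hfg
    funext i
    exact eq_of_edist_eq_zero
      (le_antisymm (le_trans (le_iSup (fun j => edist (f j) (g j)) i) hfg.le) zero_le)

/-- The pointwise `L`-structure on a product. -/
def piStr (L : FirstOrder.Language.{u, v}) {I : Type*} (A : I → Type*)
    [∀ i, L.Structure (A i)] : L.Structure (∀ i, A i) where
  funMap f a := fun i => Structure.funMap f fun j => a j i
  RelMap r a := ∀ i, Structure.RelMap r fun j => a j i

/-- The term algebra structure on the set of `L`-terms over `X`. -/
instance termStructure (L : FirstOrder.Language.{u, v}) (X : Type w) :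
    L.Structure (L.Term X) where
  funMap f ts := Term.func f ts
  RelMap _ _ := False

/-- A map between extended metric spaces is non-expansive if it does not increase distances. -/
def NonExpansive {α : Type*} {β : Type*} [EMetricSpace α] [EMetricSpace β] (f : α → β) : Prop :=
  ∀ a b : α, edist (f a) (f b) ≤ edist a b

/-- A metric `L`-algebra: a type equipped with an extended metric and an `L`-structure. -/
structure MetricAlg (L : FirstOrder.Language.{u, v}) where
  carrier : Type u
  [emetric : EMetricSpace carrier]
  [str : L.Structure carrier]

attribute [instance] MetricAlg.emetric MetricAlg.str

instance {L : FirstOrder.Language.{u, v}} : CoeSort (MetricAlg L) (Type u) :=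
  ⟨MetricAlg.carrier⟩

variable {L : FirstOrder.Language.{u, v}}

/-- Satisfaction of the M-equation `X ⊢ s =_ε t` in a metric `L`-algebra. -/
def Sat (A : MetricAlg L) {X : Type w} (s t : L.Term X) (ε : ℝ≥0∞) : Prop :=
  ∀ v : X → A, edist (s.realize v) (t.realize v) ≤ ε

/-- A metric `L`-algebra is quantitative if all its operations are non-expansive
for the sup metric on finite powers. -/
def IsQuantitative (A : MetricAlg L) : Prop :=
  ∀ (n : ℕ) (f : L.Functions n) (a b : Fin n → A),
    edist (Structure.funMap f a) (Structure.funMap f b) ≤ ⨆ i, edist (a i) (b i)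

/-- The M-product of a family of metric `L`-algebras: the product of the underlying
`L`-structures equipped with the sup extended metric. -/
def MProd {I : Type u} (A : I → MetricAlg L) : MetricAlg L where
  carrier := ∀ i, (A i).carrier
  emetric := supEMetric fun i => (A i).carrier
  str := piStr L fun i => (A i).carrier

/-- An M-subalgebra of a metric `L`-algebra: an `L`-substructure with the induced metric. -/
def MSub (A : MetricAlg L) (S : L.Substructure A.carrier) : MetricAlg L where
  carrier := S
  emetric := inferInstance
  str := inferInstance

/-- Closure of a class under isometric `L`-isomorphisms. -/
def ClosedUnderIso (K : MetricAlg L → Prop) : Prop :=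
  ∀ A B : MetricAlg L, K A → ∀ φ : A ≃[L] B, Isometry ⇑φ → K B

/-- Closure of a class under M-products (with the sup extended metric). -/
def ClosedUnderProd (K : MetricAlg L → Prop) : Prop :=
  ∀ (I : Type u) (A : I → MetricAlg L), (∀ i, K (A i)) → K (MProd A)

/-- Closure of a class under M-subalgebras (with the induced metric). -/
def ClosedUnderSub (K : MetricAlg L → Prop) : Prop :=
  ∀ A : MetricAlg L, K A → ∀ S : L.Substructure A.carrier, K (MSub A S)

/-- Closure of a class under M-quotients (surjective non-expansive homomorphic images). -/
def ClosedUnderQuot (K : MetricAlg L → Prop) : Prop :=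
  ∀ A B : MetricAlg L, K A → ∀ π : A →[L] B, Function.Surjective ⇑π → NonExpansive ⇑π → K B

/-!
A valuation `v` in a member `A` of `K` extends to `v^♯ : Term_L(X) → A`, which factors as
`h ∘ F` with `h` non-expansive; hence `d(v^♯ s, v^♯ t) ≤ d(F s, F t)`. Conversely, `F` is itself
the extension of the valuation `F ∘ var` in `FA ∈ K`.
-/

section TermAlgebra

variable {X : Type w} {M : Type*} [L.Structure M]

theorem realize_var_eq_self (u : L.Term X) : u.realize Term.var = u := by
  induction u with
  | var _ => rfl
  | func f ts ih => exact congrArg (Term.func f) (funext ih)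

theorem hom_apply_eq_realize (g : L.Term X →[L] M) (u : L.Term X) :
    g u = u.realize (g ∘ Term.var) := by
  rw [HomClass.realize_term, realize_var_eq_self]

def realizeHom (v : X → M) : L.Term X →[L] M where
  toFun u := u.realize v
  map_fun' _ _ := rfl
  map_rel' _ _ h := h.elim

end TermAlgebra

theorem edist_free_le_iff_sat_general (L : FirstOrder.Language.{u, v})
    (K : MetricAlg L → Prop)
    (X : Type u) (FA : MetricAlg L) (hFA : K FA) (F : L.Term X →[L] FA)
    (hUniv : ∀ A : MetricAlg L, K A → ∀ f : L.Term X →[L] A,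
      ∃! h : FA →[L] A, NonExpansive ⇑h ∧ ⇑h ∘ ⇑F = ⇑f)
    (s t : L.Term X) (ε : ℝ≥0∞) :
    edist (F s) (F t) ≤ ε ↔ ∀ A : MetricAlg L, K A → Sat A s t ε := by
  constructor
  · intro hFst A hA v
    obtain ⟨h, ⟨h_nonexp, h_comp⟩, -⟩ := hUniv A hA (realizeHom v)
    calc edist (s.realize v) (t.realize v) = edist (h (F s)) (h (F t)) :=
          (congrArg₂ edist (congrFun h_comp s) (congrFun h_comp t)).symm
      _ ≤ edist (F s) (F t) := h_nonexp _ _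
      _ ≤ ε := hFst
  · intro hSat
    simpa only [← hom_apply_eq_realize] using hSat FA hFA (F ∘ Term.var)

/-- Let `K` be a class of metric `L`-algebras closed under isometric
isomorphisms, M-products and M-subalgebras, and let `F : Term_L(X) → FA` be the
surjective homomorphism onto the `K`-free algebra over `X` (characterized by the
universal property). Then `d(F s, F t) ≤ ε` iff every member of `K` satisfies the
M-equation `X ⊢ s =_ε t`. -/
theorem edist_free_le_iff_sat (L : FirstOrder.Language.{u, v}) [L.IsAlgebraic]
    (K : MetricAlg L → Prop)
    (hIso : ClosedUnderIso K) (hProd : ClosedUnderProd K) (hSub : ClosedUnderSub K)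
    (X : Type u) (FA : MetricAlg L) (hFA : K FA) (F : L.Term X →[L] FA)
    (hFsurj : Function.Surjective ⇑F)
    (hUniv : ∀ A : MetricAlg L, K A → ∀ f : L.Term X →[L] A,
      ∃! h : FA →[L] A, NonExpansive ⇑h ∧ ⇑h ∘ ⇑F = ⇑f)
    (s t : L.Term X) (ε : ℝ≥0∞) :
    edist (F s) (F t) ≤ ε ↔ ∀ A : MetricAlg L, K A → Sat A s t ε :=
  edist_free_le_iff_sat_general L K X FA hFA F hUniv s t ε

end MetricAlgebraPaper
end
end

section
/- Let L be a first-order language with only function symbols and let K be a class of quantitative L-algebras (metric L-algebras all of whose operations are non-expansive with respect to the sup metric on finite powers) that is closed under isometric L-isomorphisms, M-products (with the sup extended metric), and M-subalgebras. Then for every set X there exist a quantitative L-algebra F_K(X) in K and a surjective L-homomorphism F : Term_L(X) → F_K(X) such that for every A in K and every L-homomorphism f : Term_L(X) → A there exists a unique non-expansive L-homomorphism h : F_K(X) → A with h ∘ F = f. -/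
open FirstOrder FirstOrder.Language
open scoped ENNReal

universe u v w x y z

noncomputable section

namespace MetricAlgebraPaper

variable {L : FirstOrder.Language.{u, v}}

/-! Birkhoff's construction. A valuation of `X` in a member of `K` induces a distance on terms,
and these distances form a set. Choosing one valuation for each of them, the image of the term
algebra in the M-product of their targets lies in `K`, and its distance is the supremum of all
induced distances. Hence every homomorphism from the term algebra into a member of `K`
is dominated in distance by the map onto this image, so it factors through it non-expansively. -/

theorem Term.realize_var_eq_self {X : Type w} (t : L.Term X) : t.realize Term.var = t := by
  induction t with
  | var x => rfl
  | func c ts ih => exact congrArg (Term.func c) (funext ih)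

theorem Hom.apply_eq_realize {X : Type w} {M : Type*} [L.Structure M] (f : L.Term X →[L] M)
    (t : L.Term X) : f t = t.realize (f ∘ Term.var) := by
  rw [HomClass.realize_term, Term.realize_var_eq_self]

theorem Hom.exists_comp_eq_of_surjective [L.IsAlgebraic] {M N P : Type*} [L.Structure M]
    [L.Structure N] [L.Structure P] {F : M →[L] N} (hF : Function.Surjective F) {f : M →[L] P}
    (hker : ∀ s t, F s = F t → f s = f t) : ∃ h : N →[L] P, ⇑h ∘ ⇑F = ⇑f := by
  let g := Function.surjInv hF
  refine ⟨{ toFun := f ∘ g, map_fun' := fun c x => ?_, map_rel' := fun r => isEmptyElim r },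
    funext fun s => hker _ _ (Function.surjInv_eq hF (F s))⟩
  change f (g (Structure.funMap c x)) = Structure.funMap c (f ∘ g ∘ x)
  rw [← f.map_fun]
  refine hker _ _ ?_
  rw [F.map_fun, Function.surjInv_eq hF]
  exact congrArg _ (funext fun i => (Function.surjInv_eq hF (x i)).symm)

theorem existsUnique_nonExpansive_comp_eq [L.IsAlgebraic] {M : Type*} [L.Structure M]
    {FA B : MetricAlg L} {F : M →[L] FA} (hF : Function.Surjective F) (f : M →[L] B)
    (hle : ∀ s t, edist (f s) (f t) ≤ edist (F s) (F t)) :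
    ∃! h : FA →[L] B, NonExpansive h ∧ ⇑h ∘ ⇑F = ⇑f := by
  have hker : ∀ s t, F s = F t → f s = f t := fun s t hst =>
    edist_le_zero.1 ((hle s t).trans_eq (by rw [hst, edist_self]))
  obtain ⟨h, hh⟩ := Hom.exists_comp_eq_of_surjective hF hker
  refine ⟨h, ⟨?_, hh⟩, fun h' ⟨_, hh'⟩ =>
    DFunLike.coe_injective (hF.injective_comp_right (hh'.trans hh.symm))⟩
  intro a b
  obtain ⟨s, rfl⟩ := hF a
  obtain ⟨t, rfl⟩ := hF b
  simpa only [← congrFun hh s, ← congrFun hh t, Function.comp_apply] using hle s t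

def termEDist {X : Type w} {A : MetricAlg L} (v : X → A) (s t : L.Term X) : ℝ≥0∞ :=
  edist (s.realize v) (t.realize v)

def evalHom {X : Type w} {I : Type u} (A : I → MetricAlg L) (v : ∀ i, X → A i) :
    L.Term X →[L] MProd A where
  toFun t i := t.realize (v i)
  map_fun' _ _ := rfl
  map_rel' _ _ h := h.elim

theorem edist_evalHom {X : Type w} {I : Type u} (A : I → MetricAlg L) (v : ∀ i, X → A i)
    (s t : L.Term X) :
    edist (evalHom A v s) (evalHom A v t) = ⨆ i, termEDist (v i) s t :=
  rfl

section FreeAlgebra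

variable (K : MetricAlg L → Prop) (X : Type u)

/-- Indexing by induced distances rather than by the valuations themselves keeps the index
type in `Type u`, as an M-product requires. -/
def InducedTermEDist : Type u :=
  {q : L.Term X → L.Term X → ℝ≥0∞ //
    ∃ A : MetricAlg L, K A ∧ ∃ v : X → A, termEDist v = q}

namespace InducedTermEDist

variable {K X} (q : InducedTermEDist K X)

def alg : MetricAlg L := q.2.choose

theorem alg_mem : K q.alg := q.2.choose_spec.1

def valuation : X → q.alg := q.2.choose_spec.2.choose

theorem termEDist_valuation : termEDist q.valuation = q.1 := q.2.choose_spec.2.choose_spec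

end InducedTermEDist

def freeEval : L.Term X →[L] MProd (InducedTermEDist.alg (K := K) (X := X)) :=
  evalHom _ InducedTermEDist.valuation

def FreeAlg : MetricAlg L := MSub _ (freeEval K X).range

def FreeAlg.mk : L.Term X →[L] FreeAlg K X :=
  (freeEval K X).codRestrict _ (freeEval K X).mem_range_self

theorem FreeAlg.mk_surjective : Function.Surjective (FreeAlg.mk K X) := by
  rintro ⟨_, s, rfl⟩
  exact ⟨s, rfl⟩

variable {K X}

theorem FreeAlg.mem (hProd : ClosedUnderProd K) (hSub : ClosedUnderSub K) : K (FreeAlg K X) :=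
  hSub _ (hProd _ _ InducedTermEDist.alg_mem) _

theorem FreeAlg.edist_le_edist_mk {B : MetricAlg L} (hB : K B) (f : L.Term X →[L] B)
    (s t : L.Term X) : edist (f s) (f t) ≤ edist (FreeAlg.mk K X s) (FreeAlg.mk K X t) := by
  let q : InducedTermEDist K X := ⟨termEDist (f ∘ Term.var), B, hB, _, rfl⟩
  calc edist (f s) (f t) = termEDist (f ∘ Term.var) s t := by
        rw [termEDist, ← Hom.apply_eq_realize f, ← Hom.apply_eq_realize f]
    _ = termEDist q.valuation s t := by rw [q.termEDist_valuation]
    _ ≤ ⨆ q : InducedTermEDist K X, termEDist q.valuation s t := le_iSup_of_le q le_rfl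
    _ = edist (FreeAlg.mk K X s) (FreeAlg.mk K X t) := (edist_evalHom _ _ s t).symm

end FreeAlgebra

theorem exists_free_quantitative_algebra_general (L : FirstOrder.Language.{u, v}) [L.IsAlgebraic]
    (K : MetricAlg L → Prop)
    (hQ : ∀ A : MetricAlg L, K A → IsQuantitative A)
    (hProd : ClosedUnderProd K) (hSub : ClosedUnderSub K)
    (X : Type u) :
    ∃ (FA : MetricAlg L) (F : L.Term X →[L] FA),
      K FA ∧ IsQuantitative FA ∧ Function.Surjective ⇑F ∧
        ∀ A : MetricAlg L, K A → ∀ f : L.Term X →[L] A,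
          ∃! h : FA →[L] A, NonExpansive ⇑h ∧ ⇑h ∘ ⇑F = ⇑f := by
  have hFree : K (FreeAlg K X) := FreeAlg.mem hProd hSub
  exact ⟨FreeAlg K X, FreeAlg.mk K X, hFree, hQ _ hFree, FreeAlg.mk_surjective K X,
    fun B hB f => existsUnique_nonExpansive_comp_eq (FreeAlg.mk_surjective K X) f
      (FreeAlg.edist_le_edist_mk hB f)⟩

/-- If a class `K` of quantitative `L`-algebras is closed under
isometric isomorphisms, M-products and M-subalgebras, then for every set `X` there is a
`K`-free quantitative algebra over `X`, i.e. a quantitative algebra `FA ∈ K` together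
with a surjective homomorphism `F` from the term algebra over `X` such that every
homomorphism from the term algebra to a member of `K` factors uniquely through `F`
via a non-expansive homomorphism. -/
theorem exists_free_quantitative_algebra (L : FirstOrder.Language.{u, v}) [L.IsAlgebraic]
    (K : MetricAlg L → Prop)
    (hQ : ∀ A : MetricAlg L, K A → IsQuantitative A)
    (hIso : ClosedUnderIso K) (hProd : ClosedUnderProd K) (hSub : ClosedUnderSub K)
    (X : Type u) :
    ∃ (FA : MetricAlg L) (F : L.Term X →[L] FA),
      K FA ∧ IsQuantitative FA ∧ Function.Surjective ⇑F ∧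
        ∀ A : MetricAlg L, K A → ∀ f : L.Term X →[L] A,
          ∃! h : FA →[L] A, NonExpansive ⇑h ∧ ⇑h ∘ ⇑F = ⇑f :=
  exists_free_quantitative_algebra_general L K hQ hProd hSub X

end MetricAlgebraPaper
end
end
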